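/- Let α ∈ (0,1] and f ∈ L¹(ℝ³). The following are equivalent: (i) there exists K ≥ 0 such that Ω(f, I(x,r)) ≤ K·r^α for every x ∈ ℝ³ and every 0 < r < 1/2; (ii) there exist a function g : ℝ³ → ℝ and L ≥ 0 such that f = g almost everywhere and |g(x) − g(y)| ≤ L·|x − y|^α whenever x, y ∈ ℝ³ satisfy |x − y| ≤ 1/4. In other words, membership in the weighted bmo space with power weight φ(r) = r^α is equivalent to having a locally α-Hölder continuous representative. -/

import Mathlib

/-!
Hölder ⇒ bmo: chaining makes the representative `g` Hölder up to distance `1`, which exceeds the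
diameter `√3 r` of a cube of side `r < 1/2`, and the mean oscillation of `g` on a cube is at most
its oscillation there.

bmo ⇒ Hölder (Campanato): halving the side of a concentric cube changes the average by at most
`8 K r^α`, so the averages over the dyadic cubes centred at `x` converge geometrically to a limit
`g x`, within `C r^α` of the average at scale `r`. A cube of side `r` lies in the ball of radius
`r`, of comparable volume, so Lebesgue differentiation along balls gives `g = f` a.e.
If `|x - y| ≤ r < 2 |x - y|`, the cubes of side `r` about `x` and `y` both lie in the cube of side
`3 r` about `x`, whose average is within `27 K (3 r)^α` of theirs. Hence
`|g x - g y| ≲ K |x - y|^α` for `|x - y| ≤ 1/16`, and chaining reaches `1/4`.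
-/

open MeasureTheory Set

/-- The open cube in `ℝ³` centered at `x` with side length `r`. -/
def cube (x : EuclideanSpace ℝ (Fin 3)) (r : ℝ) : Set (EuclideanSpace ℝ (Fin 3)) :=
  {y | ∀ i : Fin 3, |y i - x i| < r / 2}

/-- The mean value `f_{I(x,r)}` of `f` over the cube `I(x,r)` (of volume `r³`). -/
noncomputable def cubeAvg (f : EuclideanSpace ℝ (Fin 3) → ℝ)
    (x : EuclideanSpace ℝ (Fin 3)) (r : ℝ) : ℝ :=
  (r ^ 3)⁻¹ * ∫ y in cube x r, f y

/-- The mean oscillation `Ω(f, I(x,r))` of `f` over the cube `I(x,r)`. -/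
noncomputable def meanOsc (f : EuclideanSpace ℝ (Fin 3) → ℝ)
    (x : EuclideanSpace ℝ (Fin 3)) (r : ℝ) : ℝ :=
  (r ^ 3)⁻¹ * ∫ y in cube x r, |f y - cubeAvg f x r|

open Filter Metric Topology

section LocallyHolder

variable {E F : Type*} [SeminormedAddCommGroup E] [SeminormedAddCommGroup F]

def LocallyHolderWith (L α δ : ℝ) (g : E → F) : Prop :=
  ∀ x y, ‖x - y‖ ≤ δ → ‖g x - g y‖ ≤ L * ‖x - y‖ ^ α

theorem LocallyHolderWith.nat_mul [NormedSpace ℝ E] {L α δ : ℝ} {g : E → F}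
    (hg : LocallyHolderWith L α δ g) (hα : 0 ≤ α) (hL : 0 ≤ L) {n : ℕ} (hn : 0 < n) :
    LocallyHolderWith (n * L) α (n * δ) g := by
  intro x y hxy
  have hn' : (0 : ℝ) < n := Nat.cast_pos.2 hn
  set z : ℕ → E := fun k => AffineMap.lineMap x y ((k : ℝ) / n)
  have hstep : ∀ k, ‖z k - z (k + 1)‖ = ‖x - y‖ / n := by
    intro k
    rw [← dist_eq_norm, dist_lineMap_lineMap, Real.dist_eq, dist_eq_norm, norm_sub_rev x y]
    push_cast
    rw [show (k : ℝ) / n - (k + 1) / n = -(1 / n) by ring, abs_neg, abs_of_pos (by positivity)]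
    ring
  have hlink : ∀ k, ‖g (z k) - g (z (k + 1))‖ ≤ L * ‖x - y‖ ^ α := by
    intro k
    have hdn : ‖x - y‖ / n ≤ ‖x - y‖ :=
      div_le_self (norm_nonneg _) (Nat.one_le_cast.2 hn)
    calc ‖g (z k) - g (z (k + 1))‖ ≤ L * ‖z k - z (k + 1)‖ ^ α :=
          hg _ _ (by rw [hstep, div_le_iff₀ hn']; linarith)
      _ ≤ L * ‖x - y‖ ^ α := by rw [hstep]; gcongr
  calc ‖g x - g y‖ = dist (g (z 0)) (g (z n)) := by
        simp [z, dist_eq_norm, div_self hn'.ne']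
    _ ≤ ∑ k ∈ Finset.range n, dist (g (z k)) (g (z (k + 1))) :=
        dist_le_range_sum_dist (fun k => g (z k)) n
    _ ≤ ∑ _k ∈ Finset.range n, L * ‖x - y‖ ^ α :=
        Finset.sum_le_sum fun k _ => by rw [dist_eq_norm]; exact hlink k
    _ = n * L * ‖x - y‖ ^ α := by simp [mul_assoc]

end LocallyHolder

section Averages

variable {X : Type*} [MeasurableSpace X] {μ : Measure X} {s t : Set X} {f : X → ℝ}

theorem abs_setAverage_sub_le (c : ℝ) (hst : s ⊆ t) (hs : μ s ≠ 0) (ht : μ t ≠ ⊤)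
    (hf : IntegrableOn f t μ) :
    |⨍ y in s, f y ∂μ - c| ≤ (μ.real s)⁻¹ * ∫ y in t, |f y - c| ∂μ := by
  have hs' : μ s ≠ ⊤ := ne_top_of_le_ne_top ht (measure_mono hst)
  have hsr : μ.real s ≠ 0 := (measureReal_ne_zero_iff hs').2 hs
  have hfc : IntegrableOn (fun y => f y - c) t μ := hf.sub (integrableOn_const ht)
  have havg : ⨍ y in s, f y ∂μ - c = (μ.real s)⁻¹ * ∫ y in s, (f y - c) ∂μ := by
    rw [integral_sub (hf.mono_set hst) (integrableOn_const hs'), setIntegral_const,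
      setAverage_eq, smul_eq_mul, smul_eq_mul, mul_sub, inv_mul_cancel_left₀ hsr]
  rw [havg, abs_mul, abs_inv, abs_of_nonneg measureReal_nonneg]
  gcongr
  calc |∫ y in s, (f y - c) ∂μ| ≤ ∫ y in s, |f y - c| ∂μ := abs_integral_le_integral_abs
    _ ≤ ∫ y in t, |f y - c| ∂μ :=
        setIntegral_mono_set hfc.abs (ae_of_all _ fun _ => abs_nonneg _) hst.eventuallyLE

theorem setAverage_abs_sub_setAverage_le (hsm : MeasurableSet s) (hs : μ s ≠ 0) (hs' : μ s ≠ ⊤)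
    (hf : IntegrableOn f s μ) {M : ℝ} (hM : ∀ y ∈ s, ∀ z ∈ s, |f y - f z| ≤ M) :
    ⨍ y in s, |f y - ⨍ z in s, f z ∂μ| ∂μ ≤ M := by
  have hpt : ∀ y ∈ s, |f y - ⨍ z in s, f z ∂μ| ≤ M := by
    intro y hy
    have : ⨍ z in s, f z ∂μ ∈ closedBall (f y) M :=
      (convex_closedBall _ _).set_average_mem isClosed_closedBall hs hs'
        ((ae_restrict_iff' hsm).2 (ae_of_all _ fun z hz => by
          rw [mem_closedBall, Real.dist_eq, abs_sub_comm]; exact hM y hy z hz)) hf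
    rwa [mem_closedBall, Real.dist_eq, abs_sub_comm] at this
  exact (convex_Iic M).set_average_mem isClosed_Iic hs hs'
    ((ae_restrict_iff' hsm).2 (ae_of_all _ hpt))
    (hf.sub (integrableOn_const hs')).abs

end Averages

theorem EuclideanSpace.norm_le_sqrt_card_mul {ι : Type*} [Fintype ι] (v : EuclideanSpace ℝ ι)
    {t : ℝ} (ht : 0 ≤ t) (hv : ∀ i, |v i| ≤ t) : ‖v‖ ≤ √(Fintype.card ι) * t := by
  rw [EuclideanSpace.norm_eq, ← Real.sqrt_sq ht, ← Real.sqrt_mul (Nat.cast_nonneg _)]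
  refine Real.sqrt_le_sqrt ?_
  calc ∑ i, ‖v i‖ ^ 2 ≤ ∑ _i : ι, t ^ 2 :=
        Finset.sum_le_sum fun i _ => by
          rw [Real.norm_eq_abs]; exact pow_le_pow_left₀ (abs_nonneg _) (hv i) 2
    _ = Fintype.card ι * t ^ 2 := by simp

section Cube

variable {f : EuclideanSpace ℝ (Fin 3) → ℝ} {x x' y z : EuclideanSpace ℝ (Fin 3)} {r r' : ℝ}

theorem cube_eq_preimage (x : EuclideanSpace ℝ (Fin 3)) (r : ℝ) :
    cube x r = (MeasurableEquiv.toLp 2 (Fin 3 → ℝ)).symm ⁻¹'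
      univ.pi fun i => Ioo (x i - r / 2) (x i + r / 2) := by
  ext y
  simp only [cube, mem_ofPred_eq, mem_preimage, Set.mem_pi, mem_univ, forall_true_left, mem_Ioo,
    MeasurableEquiv.coe_toLp_symm, abs_lt]
  exact forall_congr' fun i => by constructor <;> intro h <;> constructor <;> linarith [h.1, h.2]

theorem measurableSet_cube (x : EuclideanSpace ℝ (Fin 3)) (r : ℝ) : MeasurableSet (cube x r) := by
  rw [cube_eq_preimage]
  exact (MeasurableEquiv.toLp 2 (Fin 3 → ℝ)).symm.measurable
    (MeasurableSet.univ_pi fun _ => measurableSet_Ioo)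

theorem volume_cube (x : EuclideanSpace ℝ (Fin 3)) (hr : 0 ≤ r) :
    volume (cube x r) = ENNReal.ofReal (r ^ 3) := by
  rw [cube_eq_preimage, (EuclideanSpace.volume_preserving_symm_measurableEquiv_toLp
    (Fin 3)).measure_preimage (MeasurableSet.univ_pi fun _ => measurableSet_Ioo).nullMeasurableSet,
    volume_pi_pi]
  simp only [Real.volume_Ioo, add_sub_sub_cancel, add_halves, Finset.prod_const, Finset.card_univ,
    Fintype.card_fin, ENNReal.ofReal_pow hr]

theorem volume_real_cube (x : EuclideanSpace ℝ (Fin 3)) (hr : 0 ≤ r) :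
    volume.real (cube x r) = r ^ 3 := by
  rw [measureReal_def, volume_cube x hr, ENNReal.toReal_ofReal (by positivity)]

theorem volume_cube_ne_zero (x : EuclideanSpace ℝ (Fin 3)) (hr : 0 < r) :
    volume (cube x r) ≠ 0 := by
  rw [volume_cube x hr.le]; exact ENNReal.ofReal_ne_zero_iff.2 (by positivity)

theorem volume_cube_ne_top (x : EuclideanSpace ℝ (Fin 3)) (hr : 0 ≤ r) :
    volume (cube x r) ≠ ⊤ := by
  rw [volume_cube x hr]; exact ENNReal.ofReal_ne_top

theorem cubeAvg_eq_setAverage (f : EuclideanSpace ℝ (Fin 3) → ℝ) (x : EuclideanSpace ℝ (Fin 3))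
    (hr : 0 ≤ r) : cubeAvg f x r = ⨍ y in cube x r, f y := by
  rw [cubeAvg, setAverage_eq, volume_real_cube x hr, smul_eq_mul]

theorem meanOsc_eq_setAverage (f : EuclideanSpace ℝ (Fin 3) → ℝ) (x : EuclideanSpace ℝ (Fin 3))
    (hr : 0 ≤ r) : meanOsc f x r = ⨍ y in cube x r, |f y - ⨍ z in cube x r, f z| := by
  rw [meanOsc, setAverage_eq, volume_real_cube x hr, smul_eq_mul, cubeAvg_eq_setAverage f x hr]

theorem dist_le_of_mem_cube (hy : y ∈ cube x r) (hz : z ∈ cube x r) : dist y z ≤ √3 * r := by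
  have hr : 0 ≤ r := by linarith [abs_nonneg (y 0 - x 0), hy 0]
  rw [dist_eq_norm]
  refine (EuclideanSpace.norm_le_sqrt_card_mul _ hr fun i => ?_).trans_eq (by simp)
  calc |(y - z) i| = |(y i - x i) - (z i - x i)| := by simp
    _ ≤ |y i - x i| + |z i - x i| := abs_sub _ _
    _ ≤ r := by linarith [hy i, hz i]

theorem cube_subset_closedBall (x : EuclideanSpace ℝ (Fin 3)) (r : ℝ) :
    cube x r ⊆ closedBall x r := by
  intro y hy
  have hr : 0 ≤ r := by linarith [abs_nonneg (y 0 - x 0), hy 0]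
  have h3 : √3 ≤ 2 := Real.sqrt_le_iff.2 ⟨by norm_num, by norm_num⟩
  rw [mem_closedBall, dist_eq_norm]
  calc ‖y - x‖ ≤ √3 * (r / 2) := by
        refine (EuclideanSpace.norm_le_sqrt_card_mul (t := r / 2) _ (by positivity)
          fun i => ?_).trans_eq (by simp)
        exact (hy i).le
    _ ≤ r := by nlinarith

theorem cube_subset_cube (h : r' + 2 * dist x' x ≤ r) : cube x' r' ⊆ cube x r := by
  intro y hy i
  have hxi : |x' i - x i| ≤ dist x' x := by
    simpa [Real.dist_eq] using PiLp.dist_apply_le x' x i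
  calc |y i - x i| ≤ |y i - x' i| + |x' i - x i| := abs_sub_le _ _ _
    _ < r / 2 := by linarith [hy i]

theorem cubeAvg_congr_ae {g : EuclideanSpace ℝ (Fin 3) → ℝ} (hfg : f =ᵐ[volume] g)
    (x : EuclideanSpace ℝ (Fin 3)) (r : ℝ) : cubeAvg f x r = cubeAvg g x r := by
  rw [cubeAvg, cubeAvg, integral_congr_ae (ae_restrict_of_ae hfg)]

theorem meanOsc_congr_ae {g : EuclideanSpace ℝ (Fin 3) → ℝ} (hfg : f =ᵐ[volume] g)
    (x : EuclideanSpace ℝ (Fin 3)) (r : ℝ) : meanOsc f x r = meanOsc g x r := by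
  rw [meanOsc, meanOsc, cubeAvg_congr_ae hfg,
    integral_congr_ae (ae_restrict_of_ae (hfg.mono fun y hy => by rw [hy]))]

theorem abs_cubeAvg_sub_cubeAvg_le (hf : IntegrableOn f (cube x r) volume) (hr : 0 < r)
    (hr' : 0 < r') (hsub : cube x' r' ⊆ cube x r) :
    |cubeAvg f x' r' - cubeAvg f x r| ≤ (r / r') ^ 3 * meanOsc f x r := by
  have h := abs_setAverage_sub_le (cubeAvg f x r) hsub (volume_cube_ne_zero x' hr')
    (volume_cube_ne_top x hr.le) hf
  rw [volume_real_cube x' hr'.le, ← cubeAvg_eq_setAverage f x' hr'.le] at h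
  refine h.trans_eq ?_
  rw [meanOsc]
  field_simp

theorem ae_tendsto_cubeAvg (hf : LocallyIntegrable f volume) :
    ∀ᵐ x, Tendsto (cubeAvg f x) (𝓝[>] 0) (𝓝 (f x)) := by
  filter_upwards [IsUnifLocDoublingMeasure.ae_tendsto_average_norm_sub volume hf 1] with x hx
  have hball : Tendsto (fun r => ⨍ y in closedBall x r, ‖f y - f x‖) (𝓝[>] 0) (𝓝 0) :=
    hx (fun _ => x) id tendsto_id <| by
      filter_upwards [self_mem_nhdsWithin] with r (hr : 0 < r)
      exact mem_closedBall_self (by simpa using hr.le)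
  obtain ⟨c, hc, hvol⟩ :
      ∃ c : ℝ, 0 < c ∧ ∀ r : ℝ, 0 ≤ r → volume.real (closedBall x r) = r ^ 3 * c :=
    ⟨_, ENNReal.toReal_pos (measure_closedBall_pos volume (0 : EuclideanSpace ℝ (Fin 3))
      one_pos).ne' measure_closedBall_lt_top.ne, fun r hr => by
      rw [Measure.addHaar_real_closedBall' volume x hr, finrank_euclideanSpace_fin,
        measureReal_def]⟩
  have hbound : ∀ r > 0, ‖cubeAvg f x r - f x‖ ≤ c * ⨍ y in closedBall x r, ‖f y - f x‖ := by
    intro r hr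
    have h := abs_setAverage_sub_le (f x) (cube_subset_closedBall x r) (volume_cube_ne_zero x hr)
      measure_closedBall_lt_top.ne (hf.integrableOn_isCompact (isCompact_closedBall x r))
    rw [volume_real_cube x hr.le, ← cubeAvg_eq_setAverage f x hr.le] at h
    refine h.trans_eq ?_
    rw [setAverage_eq, hvol r hr.le, smul_eq_mul]
    simp only [Real.norm_eq_abs]
    field_simp
  rw [tendsto_iff_norm_sub_tendsto_zero]
  refine squeeze_zero' (Eventually.of_forall fun _ => norm_nonneg _) ?_
    (by simpa using hball.const_mul c)
  filter_upwards [self_mem_nhdsWithin] with r hr using hbound r hr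

end Cube

-- `f ∈ bmo_φ` for the power weight `φ(r) = r^α`, with constant `K`.
def BMOWith (K α : ℝ) (f : EuclideanSpace ℝ (Fin 3) → ℝ) : Prop :=
  ∀ x r, 0 < r → r < 1 / 2 → meanOsc f x r ≤ K * r ^ α

theorem bmoWith_of_locallyHolderWith {f g : EuclideanSpace ℝ (Fin 3) → ℝ} {α L : ℝ}
    (hα0 : 0 ≤ α) (hα1 : α ≤ 1) (hL : 0 ≤ L) (hf : Integrable f volume) (hfg : f =ᵐ[volume] g)
    (hg : LocallyHolderWith L α (1 / 4) g) : BMOWith (8 * L) α f := by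
  intro x r hr hr'
  have hg1 : LocallyHolderWith (4 * L) α 1 g := by
    simpa using hg.nat_mul hα0 hL (n := 4) (by norm_num)
  rw [meanOsc_congr_ae hfg, meanOsc_eq_setAverage g x hr.le]
  refine setAverage_abs_sub_setAverage_le (measurableSet_cube x r) (volume_cube_ne_zero x hr)
    (volume_cube_ne_top x hr.le) (hf.congr hfg).integrableOn fun y hy z hz => ?_
  have hyz : ‖y - z‖ ≤ 2 * r := by
    rw [← dist_eq_norm]
    refine (dist_le_of_mem_cube hy hz).trans ?_
    gcongr
    exact Real.sqrt_le_iff.2 ⟨by norm_num, by norm_num⟩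
  calc |g y - g z| ≤ 4 * L * ‖y - z‖ ^ α := hg1 y z (by linarith)
    _ ≤ 4 * L * (2 * r) ^ α := by gcongr
    _ = 4 * L * (2 ^ α * r ^ α) := by rw [Real.mul_rpow zero_le_two hr.le]
    _ ≤ 4 * L * (2 * r ^ α) := by gcongr; exact Real.rpow_le_self_of_one_le one_le_two hα1
    _ = 8 * L * r ^ α := by ring

noncomputable def dyadicRadius (n : ℕ) : ℝ := (1 / 2) ^ n / 4

theorem dyadicRadius_pos (n : ℕ) : 0 < dyadicRadius n := by unfold dyadicRadius; positivity

theorem dyadicRadius_le_quarter (n : ℕ) : dyadicRadius n ≤ 1 / 4 := by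
  unfold dyadicRadius
  have : (1 / 2 : ℝ) ^ n ≤ 1 := pow_le_one₀ (by norm_num) (by norm_num)
  linarith

theorem dyadicRadius_succ (n : ℕ) : dyadicRadius (n + 1) = dyadicRadius n / 2 := by
  unfold dyadicRadius; ring

theorem rpow_dyadicRadius {α : ℝ} (n : ℕ) :
    dyadicRadius n ^ α = (1 / 4 : ℝ) ^ α * ((1 / 2 : ℝ) ^ α) ^ n := by
  rw [dyadicRadius, div_eq_mul_one_div, Real.mul_rpow (by positivity) (by norm_num), mul_comm,
    Real.rpow_pow_comm (by norm_num)]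

theorem exists_dyadicRadius_mem_Ico {d : ℝ} (hd : 0 < d) (hd' : d ≤ 1 / 4) :
    ∃ n, dyadicRadius n ∈ Ico d (2 * d) := by
  obtain ⟨n, hn1, hn⟩ := exists_nat_pow_near_of_lt_one (x := 4 * d) (y := 1 / 2)
    (by positivity) (by linarith) (by norm_num) (by norm_num)
  rw [pow_succ] at hn1
  exact ⟨n, by unfold dyadicRadius; linarith, by unfold dyadicRadius; linarith⟩

theorem half_rpow_lt_one {α : ℝ} (hα : 0 < α) : (1 / 2 : ℝ) ^ α < 1 :=
  Real.rpow_lt_one (by norm_num) (by norm_num) hα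

theorem tendsto_dyadicRadius : Tendsto dyadicRadius atTop (𝓝[>] 0) :=
  tendsto_nhdsWithin_iff.2 ⟨by
    have := (tendsto_pow_atTop_nhds_zero_of_lt_one (r := (1 / 2 : ℝ)) (by norm_num)
      (by norm_num)).div_const 4
    rwa [zero_div] at this, Eventually.of_forall dyadicRadius_pos⟩

noncomputable def cubeAvgLimit (f : EuclideanSpace ℝ (Fin 3) → ℝ) (x : EuclideanSpace ℝ (Fin 3)) :
    ℝ :=
  limUnder atTop fun n => cubeAvg f x (dyadicRadius n)

section Campanato

variable {f : EuclideanSpace ℝ (Fin 3) → ℝ} {α K : ℝ}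

theorem abs_cubeAvg_sub_cubeAvg_le_of_dist (hf : Integrable f volume) (hK : BMOWith K α f)
    {x y : EuclideanSpace ℝ (Fin 3)} {ρ : ℝ} (hρ : 0 < ρ) (hyx : dist y x ≤ ρ)
    (hρ' : 3 * ρ < 1 / 2) :
    |cubeAvg f y ρ - cubeAvg f x ρ| ≤ 54 * K * (3 * ρ) ^ α := by
  have hR : 0 < 3 * ρ := by positivity
  have hratio : (3 * ρ / ρ) ^ 3 = 27 := by field_simp; norm_num
  have hosc : 27 * meanOsc f x (3 * ρ) ≤ 27 * (K * (3 * ρ) ^ α) := by gcongr; exact hK x _ hR hρ'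
  have hy := abs_cubeAvg_sub_cubeAvg_le hf.integrableOn hR hρ (cube_subset_cube (r := 3 * ρ)
    (by linarith))
  have hx := abs_cubeAvg_sub_cubeAvg_le hf.integrableOn hR hρ (cube_subset_cube (x' := x) (x := x)
    (r := 3 * ρ) (by rw [dist_self]; linarith))
  rw [hratio] at hx hy
  calc |cubeAvg f y ρ - cubeAvg f x ρ|
      ≤ |cubeAvg f y ρ - cubeAvg f x (3 * ρ)| + |cubeAvg f x (3 * ρ) - cubeAvg f x ρ| :=
        abs_sub_le _ _ _
    _ ≤ 54 * K * (3 * ρ) ^ α := by rw [abs_sub_comm (cubeAvg f x _)]; linarith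

theorem dist_cubeAvg_dyadicRadius_succ_le (hf : Integrable f volume) (hK : BMOWith K α f)
    (x : EuclideanSpace ℝ (Fin 3)) (n : ℕ) :
    dist (cubeAvg f x (dyadicRadius n)) (cubeAvg f x (dyadicRadius (n + 1))) ≤
      8 * K * (1 / 4 : ℝ) ^ α * ((1 / 2 : ℝ) ^ α) ^ n := by
  have hρ := dyadicRadius_pos n
  have hsub : cube x (dyadicRadius (n + 1)) ⊆ cube x (dyadicRadius n) :=
    cube_subset_cube (by rw [dyadicRadius_succ, dist_self]; linarith)
  have h := abs_cubeAvg_sub_cubeAvg_le hf.integrableOn hρ (dyadicRadius_pos (n + 1)) hsub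
  have hratio : (dyadicRadius n / dyadicRadius (n + 1)) ^ 3 = 8 := by
    rw [dyadicRadius_succ]; field_simp; norm_num
  rw [hratio] at h
  rw [dist_comm, Real.dist_eq, mul_assoc, mul_assoc, ← rpow_dyadicRadius]
  calc _ ≤ 8 * meanOsc f x (dyadicRadius n) := h
    _ ≤ 8 * (K * dyadicRadius n ^ α) := by
        gcongr
        exact hK x _ hρ (by linarith [dyadicRadius_le_quarter n])

theorem tendsto_cubeAvg_cubeAvgLimit (hα : 0 < α) (hf : Integrable f volume)
    (hK : BMOWith K α f) (x : EuclideanSpace ℝ (Fin 3)) :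
    Tendsto (fun n => cubeAvg f x (dyadicRadius n)) atTop (𝓝 (cubeAvgLimit f x)) :=
  (cauchySeq_of_le_geometric _ _ (half_rpow_lt_one hα)
    (dist_cubeAvg_dyadicRadius_succ_le hf hK x)).tendsto_limUnder

theorem dist_cubeAvg_cubeAvgLimit_le (hα : 0 < α) (hf : Integrable f volume)
    (hK : BMOWith K α f) (x : EuclideanSpace ℝ (Fin 3)) (n : ℕ) :
    dist (cubeAvg f x (dyadicRadius n)) (cubeAvgLimit f x) ≤
      8 * K / (1 - (1 / 2 : ℝ) ^ α) * dyadicRadius n ^ α := by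
  refine (dist_le_of_le_geometric_of_tendsto _ _ (half_rpow_lt_one hα)
    (dist_cubeAvg_dyadicRadius_succ_le hf hK x) (tendsto_cubeAvg_cubeAvgLimit hα hf hK x)
    n).trans_eq ?_
  rw [rpow_dyadicRadius]
  ring

theorem ae_eq_cubeAvgLimit (hα : 0 < α) (hf : Integrable f volume)
    (hK : BMOWith K α f) : f =ᵐ[volume] cubeAvgLimit f := by
  filter_upwards [ae_tendsto_cubeAvg hf.locallyIntegrable] with x hx
  exact tendsto_nhds_unique (hx.comp tendsto_dyadicRadius) (tendsto_cubeAvg_cubeAvgLimit hα hf hK x)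

theorem exists_locallyHolderWith_cubeAvgLimit (hα0 : 0 < α) (hα1 : α ≤ 1) (hK0 : 0 ≤ K)
    (hf : Integrable f volume) (hK : BMOWith K α f) :
    ∃ L, 0 ≤ L ∧ LocallyHolderWith L α (1 / 16) (cubeAvgLimit f) := by
  set C := 8 * K / (1 - (1 / 2 : ℝ) ^ α)
  have hC : 0 ≤ C := div_nonneg (by positivity) (sub_nonneg.2 (half_rpow_lt_one hα0).le)
  refine ⟨6 * (2 * C + 54 * K), by positivity, fun x y hxy => ?_⟩
  rcases (norm_nonneg (x - y)).eq_or_lt with hd | hd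
  · obtain rfl : x = y := sub_eq_zero.1 (norm_eq_zero.1 hd.symm)
    simp [Real.zero_rpow hα0.ne']
  set d := ‖x - y‖
  obtain ⟨n, hdρ, hρd⟩ := exists_dyadicRadius_mem_Ico hd (by linarith)
  set ρ := dyadicRadius n
  have hρ : 0 < ρ := dyadicRadius_pos n
  have htail : ∀ z, |cubeAvgLimit f z - cubeAvg f z ρ| ≤ C * (3 * ρ) ^ α := by
    intro z
    rw [abs_sub_comm, ← Real.dist_eq]
    exact (dist_cubeAvg_cubeAvgLimit_le hα0 hf hK z n).trans
      (mul_le_mul_of_nonneg_left (Real.rpow_le_rpow hρ.le (by linarith) hα0.le) hC)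
  have hmid : |cubeAvg f y ρ - cubeAvg f x ρ| ≤ 54 * K * (3 * ρ) ^ α :=
    abs_cubeAvg_sub_cubeAvg_le_of_dist hf hK hρ (by rw [dist_eq_norm, norm_sub_rev]; exact hdρ)
      (by linarith)
  have h3ρ : (3 * ρ) ^ α ≤ 6 * d ^ α :=
    calc (3 * ρ) ^ α ≤ (6 * d) ^ α := Real.rpow_le_rpow (by positivity) (by linarith) hα0.le
      _ = 6 ^ α * d ^ α := Real.mul_rpow (by norm_num) hd.le
      _ ≤ 6 * d ^ α := by gcongr; exact Real.rpow_le_self_of_one_le (by norm_num) hα1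
  have hx := abs_le.1 (htail x)
  have hy := abs_le.1 (htail y)
  have hm := abs_le.1 hmid
  calc ‖cubeAvgLimit f x - cubeAvgLimit f y‖ ≤ (2 * C + 54 * K) * (3 * ρ) ^ α := by
        rw [Real.norm_eq_abs, abs_le]; constructor <;> linarith
    _ ≤ (2 * C + 54 * K) * (6 * d ^ α) := by gcongr
    _ = 6 * (2 * C + 54 * K) * d ^ α := by ring

end Campanato

theorem exists_locallyHolderWith_of_bmoWith {f : EuclideanSpace ℝ (Fin 3) → ℝ} {α K : ℝ}
    (hα0 : 0 < α) (hα1 : α ≤ 1) (hf : Integrable f volume) (hK0 : 0 ≤ K) (hK : BMOWith K α f) :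
    ∃ (g : EuclideanSpace ℝ (Fin 3) → ℝ) (L : ℝ), 0 ≤ L ∧ f =ᵐ[volume] g ∧
      LocallyHolderWith L α (1 / 4) g := by
  obtain ⟨L, hL, hholder⟩ := exists_locallyHolderWith_cubeAvgLimit hα0 hα1 hK0 hf hK
  have := hholder.nat_mul hα0.le hL (n := 4) (by norm_num)
  norm_num at this
  exact ⟨cubeAvgLimit f, 4 * L, by positivity, ae_eq_cubeAvgLimit hα0 hf hK, this⟩

/-- **Campanato–Meyers equivalence.** For `α ∈ (0,1]` and `f ∈ L¹(ℝ³)`, the power-weight bmo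
condition `Ω(f, I(x,r)) ≤ K·r^α` (for all `x`, `0 < r < 1/2`) holds for some `K ≥ 0` iff `f`
has a representative `g` that is locally `α`-Hölder: `|g(x) − g(y)| ≤ L·|x−y|^α` whenever
`|x − y| ≤ 1/4`. -/
theorem bmo_power_weight_iff_holder
    (α : ℝ) (hα0 : 0 < α) (hα1 : α ≤ 1)
    (f : EuclideanSpace ℝ (Fin 3) → ℝ) (hf : Integrable f volume) :
    (∃ K : ℝ, 0 ≤ K ∧ ∀ (x : EuclideanSpace ℝ (Fin 3)) (r : ℝ), 0 < r → r < 1 / 2 →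
        meanOsc f x r ≤ K * r ^ α) ↔
    (∃ (g : EuclideanSpace ℝ (Fin 3) → ℝ) (L : ℝ), 0 ≤ L ∧ f =ᵐ[volume] g ∧
        ∀ x y : EuclideanSpace ℝ (Fin 3), ‖x - y‖ ≤ 1 / 4 →
          |g x - g y| ≤ L * ‖x - y‖ ^ α) := by
  constructor
  · rintro ⟨K, hK0, hK⟩
    exact exists_locallyHolderWith_of_bmoWith hα0 hα1 hf hK0 hK
  · rintro ⟨g, L, hL, hfg, hg⟩
    exact ⟨8 * L, by positivity, bmoWith_of_locallyHolderWith hα0.le hα1 hL hf hfg hg⟩
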